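/- Let agents be totally ordered by distinct keys and each agent hold a state in {L, N, U}. Call an ordered pair (a_i, a_j) with i < j disordered if it matches one of the rules: both states N; states (U,L); states (U,N); states (N,L). If a meaningful interaction occurs between agents a_i and a_j (i < j) — i.e., rule (N,N) -> (L,U), or a swap rule (U,L) -> (L,U), (U,N) -> (N,U), (N,L) -> (L,N) — then the total number of disordered pairs over all pairs of agents strictly decreases. -/
import Mathlib


/-- States of the median protocol. -/
inductive MedState | L | N | U
deriving DecidableEq

open MedState

/-- An ordered pair of states (of agents `a_i, a_j` with `i < j`) is *disordered*
if it matches one of the transition rules. -/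
def disorderedPair : MedState → MedState → Prop
  | N, N => True
  | U, L => True
  | U, N => True
  | N, L => True
  | _, _ => False

instance : ∀ s t, Decidable (disorderedPair s t) := by
  intro s t; cases s <;> cases t <;> simp [disorderedPair] <;> infer_instance

/-- The disorder of a configuration: the number of pairs `i < j` whose states
form a disordered pair. -/
def disorder {n : ℕ} (c : Fin n → MedState) : ℕ :=
  (Finset.univ.filter fun p : Fin n × Fin n =>
    p.1 < p.2 ∧ disorderedPair (c p.1) (c p.2)).card

/-- The meaningful interaction rules: they map the (disordered) pair of states of
`(a_i, a_j)` with `i < j` to the new pair of states. -/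
def medRule : MedState → MedState → MedState × MedState → Prop
  | N, N, out => out = (L, U)
  | U, L, out => out = (L, U)
  | U, N, out => out = (N, U)
  | N, L, out => out = (L, N)
  | _, _, _ => False

/-- The pairing permutation used in the proof. -/
def medSigma {n : ℕ} (i j : Fin n) (p : Fin n × Fin n) : Fin n × Fin n :=
  (if j < p.2 then Equiv.swap i j p.1 else p.1,
   if p.1 < i then Equiv.swap i j p.2 else p.2)

lemma medSwap_lt_right {n : ℕ} {i j : Fin n} (hij : i < j) (q : Fin n) :
    j < Equiv.swap i j q ↔ j < q := by
  rcases eq_or_ne q i with rfl | hqi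
  · rw [Equiv.swap_apply_left]
    exact iff_of_false (lt_irrefl _) (not_lt.2 hij.le)
  · rcases eq_or_ne q j with rfl | hqj
    · rw [Equiv.swap_apply_right]
      exact iff_of_false (not_lt.2 hij.le) (lt_irrefl _)
    · rw [Equiv.swap_apply_of_ne_of_ne hqi hqj]

lemma medSwap_lt_left {n : ℕ} {i j : Fin n} (hij : i < j) (p : Fin n) :
    Equiv.swap i j p < i ↔ p < i := by
  rcases eq_or_ne p i with rfl | hpi
  · rw [Equiv.swap_apply_left]
    exact iff_of_false (not_lt.2 hij.le) (lt_irrefl _)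
  · rcases eq_or_ne p j with rfl | hpj
    · rw [Equiv.swap_apply_right]
      exact iff_of_false (lt_irrefl _) (not_lt.2 hij.le)
    · rw [Equiv.swap_apply_of_ne_of_ne hpi hpj]

lemma medSigma_involutive {n : ℕ} {i j : Fin n} (hij : i < j) :
    Function.Involutive (medSigma i j) := by
  rintro ⟨p, q⟩
  unfold medSigma
  simp only
  have h1 : (j < if p < i then Equiv.swap i j q else q) ↔ j < q := by
    split
    · exact medSwap_lt_right hij q
    · rfl
  have h2 : ((if j < q then Equiv.swap i j p else p) < i) ↔ p < i := by
    split
    · exact medSwap_lt_left hij p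
    · rfl
  rw [if_congr h1 rfl rfl, if_congr h2 rfl rfl]
  by_cases hq : j < q <;> by_cases hp : p < i <;>
    simp [hq, hp, Equiv.swap_apply_self]

instance : Fintype MedState :=
  ⟨{MedState.L, MedState.N, MedState.U}, by intro x; cases x <;> decide⟩

lemma medKey {a b a' b' : MedState} (h : medRule a b (a', b')) :
    disorderedPair a b ∧ ¬ disorderedPair a' b' ∧
    (∀ x, disorderedPair a' x → disorderedPair a x) ∧
    (∀ x, disorderedPair a' x → disorderedPair b x) ∧
    (∀ x, disorderedPair b' x → disorderedPair a x) ∧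
    (∀ x, disorderedPair x a' → disorderedPair x b) ∧
    (∀ x, disorderedPair x b' → disorderedPair x a) ∧
    (∀ x, disorderedPair x b' → disorderedPair x b) := by
  cases a <;> cases b <;> simp only [medRule, Prod.mk.injEq] at h <;>
    first
      | exact h.elim
      | (obtain ⟨rfl, rfl⟩ := h; decide)

/-- Any meaningful interaction strictly decreases the disorder of the configuration. -/
theorem meaningful_interaction_decreases_disorder
    {n : ℕ} (c : Fin n → MedState) (i j : Fin n) (hij : i < j)
    (si' sj' : MedState) (hrule : medRule (c i) (c j) (si', sj')) :
    disorder (Function.update (Function.update c i si') j sj') < disorder c := by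
  classical
  set c' := Function.update (Function.update c i si') j sj' with hc'
  have hne : i ≠ j := ne_of_lt hij
  have hc'i : c' i = si' := by
    rw [hc', Function.update_of_ne hne, Function.update_self]
  have hc'j : c' j = sj' := by
    rw [hc', Function.update_self]
  have hc'k : ∀ k, k ≠ i → k ≠ j → c' k = c k := by
    intro k hki hkj
    rw [hc', Function.update_of_ne hkj, Function.update_of_ne hki]
  obtain ⟨hab, hab', h1, h2, h3, h4, h5, h6⟩ := medKey hrule
  set S' := Finset.univ.filter fun p : Fin n × Fin n =>
    p.1 < p.2 ∧ disorderedPair (c' p.1) (c' p.2) with hS'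
  set S := Finset.univ.filter fun p : Fin n × Fin n =>
    p.1 < p.2 ∧ disorderedPair (c p.1) (c p.2) with hS
  have hinj : Function.Injective (medSigma i j) :=
    (medSigma_involutive hij).injective
  have hsub : S'.image (medSigma i j) ⊆ S := by
    rw [Finset.image_subset_iff]
    rintro ⟨p, q⟩ hx
    simp only [hS', Finset.mem_filter, Finset.mem_univ, true_and] at hx
    obtain ⟨hpq, hD⟩ := hx
    simp only [hS, Finset.mem_filter, Finset.mem_univ, true_and]
    unfold medSigma
    simp only
    by_cases hqj : q = j
    · subst q
      rw [if_neg (lt_irrefl j)]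
      rw [hc'j] at hD
      by_cases hpi : p = i
      · subst p
        rw [hc'i] at hD
        exact absurd hD (by
          intro h; exact hab' h)
      · have hpj : p ≠ j := ne_of_lt hpq
        rw [hc'k p hpi hpj] at hD
        by_cases hplt : p < i
        · rw [if_pos hplt, Equiv.swap_apply_right]
          exact ⟨hplt, h5 _ hD⟩
        · rw [if_neg hplt]
          exact ⟨hpq, h6 _ hD⟩
    · by_cases hqi : q = i
      · subst q
        have hplt : p < i := hpq
        have hqltj : ¬ j < i := not_lt.2 hij.le
        rw [if_neg hqltj, if_pos hplt, Equiv.swap_apply_left]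
        rw [hc'i, hc'k p (ne_of_lt hplt) (ne_of_lt (hplt.trans hij))] at hD
        exact ⟨hplt.trans hij, h4 _ hD⟩
      · by_cases hpi : p = i
        · subst p
          rw [if_neg (lt_irrefl i)]
          rw [hc'i, hc'k q hqi hqj] at hD
          by_cases hjq : j < q
          · rw [if_pos hjq, Equiv.swap_apply_left]
            exact ⟨hjq, h2 _ hD⟩
          · rw [if_neg hjq]
            exact ⟨hpq, h1 _ hD⟩
        · by_cases hpj : p = j
          · subst p
            have hjq : j < q := hpq
            rw [if_pos hjq, Equiv.swap_apply_right,
              if_neg (not_lt.2 hij.le)]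
            rw [hc'j, hc'k q hqi hqj] at hD
            exact ⟨hij.trans hjq, h3 _ hD⟩
          · rw [hc'k p hpi hpj, hc'k q hqi hqj] at hD
            have e1 : (if j < q then Equiv.swap i j p else p) = p := by
              split
              · exact Equiv.swap_apply_of_ne_of_ne hpi hpj
              · rfl
            have e2 : (if p < i then Equiv.swap i j q else q) = q := by
              split
              · exact Equiv.swap_apply_of_ne_of_ne hqi hqj
              · rfl
            rw [e1, e2]
            exact ⟨hpq, hD⟩
  have hmem : (i, j) ∈ S := by
    simp only [hS, Finset.mem_filter, Finset.mem_univ, true_and]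
    exact ⟨hij, hab⟩
  have hnot : (i, j) ∉ S'.image (medSigma i j) := by
    intro hmem'
    obtain ⟨y, hy, hxy⟩ := Finset.mem_image.1 hmem'
    have hy' : y = (i, j) := by
      have : medSigma i j (i, j) = (i, j) := by
        unfold medSigma
        simp [lt_irrefl]
      exact hinj (hxy.trans this.symm)
    subst hy'
    simp only [hS', Finset.mem_filter, Finset.mem_univ, true_and] at hy
    rw [hc'i, hc'j] at hy
    exact hab' hy.2
  have hss : S'.image (medSigma i j) ⊂ S :=
    ⟨hsub, fun h => hnot (h hmem)⟩
  have : S'.card < S.card := by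
    rw [← Finset.card_image_of_injective S' hinj]
    exact Finset.card_lt_card hss
  simpa [disorder, hS, hS'] using this
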